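/- arXiv:1904.09888 — 2 statements merged into one kernel-verified Lean document; each statement's English description precedes it below -/
import Mathlib

section
/- For any pattern A chosen from the eight patterns of length 3 over {H,T}, there exists a pattern B of length 3 such that in an i.i.d. fair coin flip sequence, the probability that B occurs before A is strictly greater than 1/2. -/
open MeasureTheory ProbabilityTheory
open scoped ENNReal

/-- The pattern `P` occurs at time `n` (i.e. within the first `n` draws
`x 0, …, x (n-1)`, as the final block of `P.length` consecutive draws). -/
def occursAt {α : Type*} (P : List α) (x : ℕ → α) (n : ℕ) : Prop :=
  P.length ≤ n ∧ ∀ i (h : i < P.length), x (n - P.length + i) = P.get ⟨i, h⟩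

/-- The first time at which the pattern `P` occurs (`∞` if it never occurs). -/
noncomputable def hitTime {α : Type*} (P : List α) (x : ℕ → α) : ℝ≥0∞ :=
  sInf ((fun n : ℕ => (n : ℝ≥0∞)) '' {n | occursAt P x n})

/-- The fair-coin distribution on `Bool` (`true` = heads `H`, `false` = tails `T`). -/
noncomputable def fairCoin : Measure Bool := (PMF.bernoulli (1/2) (by norm_num)).toMeasure

/-!
Penney's game: against `A = (a, b, c)` the pattern `B = (¬b, a, b)` wins. Already on the first
eight flips, which are uniformly distributed on `Bool⁸`, `B` occurs while `A` has not yet occurred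
for more than half of the `2⁸` possible outcomes, as an enumeration shows.
-/

instance : IsProbabilityMeasure fairCoin := by
  unfold fairCoin; infer_instance

lemma fairCoin_singleton (b : Bool) : fairCoin {b} = 2⁻¹ := by
  rw [fairCoin, PMF.toMeasure_apply_singleton _ _ (measurableSet_singleton b)]
  cases b
  · change ((1 - 1/2 : NNReal) : ℝ≥0∞) = 2⁻¹
    rw [ENNReal.coe_sub]; norm_num
  · change ((1/2 : NNReal) : ℝ≥0∞) = 2⁻¹
    simp

lemma pi_fairCoin_finset {ι : Type*} [Fintype ι] (S : Finset (ι → Bool)) :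
    Measure.pi (fun _ : ι => fairCoin) S = S.card * 2⁻¹ ^ Fintype.card ι := by
  rw [← sum_measure_singleton]
  simp only [Measure.pi_singleton, fairCoin_singleton, Finset.prod_const, Finset.card_univ,
    Finset.sum_const, nsmul_eq_mul]

section Patterns

variable {α : Type*}

lemma occursAt_congr {P : List α} {x y : ℕ → α} {n : ℕ} (h : ∀ i < n, x i = y i) :
    occursAt P x n ↔ occursAt P y n :=
  and_congr_right fun _ => forall₂_congr fun _ _ => by rw [h _ (by omega)]

lemma hitTime_le_of_occursAt {P : List α} {x : ℕ → α} {n : ℕ} (h : occursAt P x n) :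
    hitTime P x ≤ n :=
  sInf_le ⟨n, h, rfl⟩

lemma lt_hitTime_of_forall_not_occursAt {P : List α} {x : ℕ → α} {t : ℕ}
    (h : ∀ s ≤ t, ¬ occursAt P x s) : t < hitTime P x := by
  have : ((t + 1 : ℕ) : ℝ≥0∞) ≤ hitTime P x := by
    refine le_sInf ?_
    rintro _ ⟨n, hn, rfl⟩
    exact Nat.cast_le.mpr (by by_contra! hlt; exact h n (by omega) hn)
  exact lt_of_lt_of_le (by exact_mod_cast Nat.lt_succ_self t) this

def OccursBeforeBy (B A : List α) (x : ℕ → α) (N : ℕ) : Prop :=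
  ∃ t ≤ N, occursAt B x t ∧ ∀ s ≤ t, ¬ occursAt A x s

instance [DecidableEq α] (B A : List α) (x : ℕ → α) (N : ℕ) :
    Decidable (OccursBeforeBy B A x N) := by
  unfold OccursBeforeBy occursAt; infer_instance

lemma OccursBeforeBy.hitTime_lt {B A : List α} {x : ℕ → α} {N : ℕ}
    (h : OccursBeforeBy B A x N) : hitTime B x < hitTime A x := by
  obtain ⟨t, -, hB, hA⟩ := h
  exact (hitTime_le_of_occursAt hB).trans_lt (lt_hitTime_of_forall_not_occursAt hA)

lemma occursBeforeBy_congr {B A : List α} {x y : ℕ → α} {N : ℕ} (h : ∀ i < N, x i = y i) :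
    OccursBeforeBy B A x N ↔ OccursBeforeBy B A y N :=
  exists_congr fun _ => and_congr_right fun _ =>
    and_congr (occursAt_congr fun i _ => h i (by omega))
      (forall₂_congr fun _ _ => not_congr (occursAt_congr fun i _ => h i (by omega)))

end Patterns

def extendPrefix {N : ℕ} (w : Fin N → Bool) (i : ℕ) : Bool :=
  if h : i < N then w ⟨i, h⟩ else false

def winningPrefixes (B A : List Bool) (N : ℕ) : Finset (Fin N → Bool) :=
  Finset.univ.filter fun w => OccursBeforeBy B A (extendPrefix w) N

lemma card_winningPrefixes_penney (a b c : Bool) :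
    128 < (winningPrefixes [!b, a, b] [a, b, c] 8).card := by
  revert a b c; decide +kernel

section CoinFlips

variable {Ω : Type*} [MeasurableSpace Ω] {μ : Measure Ω} {X : ℕ → Ω → Bool}

lemma map_prefix_eq_pi (hmeas : ∀ n, Measurable (X n)) (hindep : iIndepFun X μ)
    (hfair : ∀ n, μ.map (X n) = fairCoin) (N : ℕ) :
    μ.map (fun ω (i : Fin N) => X i ω) = Measure.pi fun _ => fairCoin := by
  rw [iIndepFun.map_fun_eq_pi_map (f := fun (i : Fin N) => X i) (fun i => (hmeas i).aemeasurable)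
    (hindep.precomp Fin.val_injective)]
  simp only [hfair]

lemma measure_prefix_mem (hmeas : ∀ n, Measurable (X n)) (hindep : iIndepFun X μ)
    (hfair : ∀ n, μ.map (X n) = fairCoin) {N : ℕ} (S : Finset (Fin N → Bool)) :
    μ {ω | (fun i : Fin N => X i ω) ∈ S} = S.card * 2⁻¹ ^ N := by
  calc μ {ω | (fun i : Fin N => X i ω) ∈ S}
      = μ.map (fun ω (i : Fin N) => X i ω) S :=
        (Measure.map_apply (measurable_pi_lambda (fun ω (i : Fin N) => X i ω) fun i => hmeas i)
          S.measurableSet).symm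
    _ = S.card * 2⁻¹ ^ N := by
        rw [map_prefix_eq_pi hmeas hindep hfair, pi_fairCoin_finset, Fintype.card_fin]

lemma measure_occursBeforeBy (hmeas : ∀ n, Measurable (X n)) (hindep : iIndepFun X μ)
    (hfair : ∀ n, μ.map (X n) = fairCoin) (B A : List Bool) (N : ℕ) :
    μ {ω | OccursBeforeBy B A (X · ω) N} = (winningPrefixes B A N).card * 2⁻¹ ^ N := by
  rw [← measure_prefix_mem hmeas hindep hfair (winningPrefixes B A N)]
  congr 1
  ext ω
  simp only [winningPrefixes, Set.mem_ofPred_eq, Finset.mem_filter, Finset.mem_univ, true_and]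
  exact occursBeforeBy_congr fun i hi => by simp [extendPrefix, hi]

end CoinFlips

theorem stmt_2_general {Ω : Type*} [MeasurableSpace Ω] (μ : Measure Ω)
    (X : ℕ → Ω → Bool) (hmeas : ∀ n, Measurable (X n))
    (hindep : iIndepFun X μ)
    (hfair : ∀ n, μ.map (X n) = fairCoin) :
    ∀ A : List Bool, A.length = 3 →
      ∃ B : List Bool, B.length = 3 ∧
        1/2 < μ {ω | hitTime B (fun n => X n ω) < hitTime A (fun n => X n ω)} := by
  intro A hA
  obtain ⟨a, b, c, rfl⟩ := List.length_eq_three.mp hA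
  refine ⟨[!b, a, b], rfl, ?_⟩
  have hcount : (128 : ℝ≥0∞) < (winningPrefixes [!b, a, b] [a, b, c] 8).card := by
    exact_mod_cast card_winningPrefixes_penney a b c
  calc (1/2 : ℝ≥0∞) = 128 * 2⁻¹ ^ 8 := by
        rw [← ENNReal.inv_pow, ← div_eq_mul_inv, ENNReal.div_eq_div_iff] <;> norm_num
    _ < (winningPrefixes [!b, a, b] [a, b, c] 8).card * 2⁻¹ ^ 8 :=
      ENNReal.mul_lt_mul_left (by norm_num) (by norm_num) hcount
    _ = μ {ω | OccursBeforeBy [!b, a, b] [a, b, c] (X · ω) 8} :=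
      (measure_occursBeforeBy hmeas hindep hfair _ _ _).symm
    _ ≤ _ := measure_mono fun _ h => h.hitTime_lt

/-- For every length-3 pattern A there is a length-3 pattern B that occurs
before A with probability strictly greater than 1/2. -/
theorem stmt_2 {Ω : Type*} [MeasurableSpace Ω] (μ : Measure Ω) [IsProbabilityMeasure μ]
    (X : ℕ → Ω → Bool) (hmeas : ∀ n, Measurable (X n))
    (hindep : iIndepFun X μ)
    (hfair : ∀ n, μ.map (X n) = fairCoin) :
    ∀ A : List Bool, A.length = 3 →
      ∃ B : List Bool, B.length = 3 ∧
        1/2 < μ {ω | hitTime B (fun n => X n ω) < hitTime A (fun n => X n ω)} :=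
  stmt_2_general μ X hmeas hindep hfair
end

section
/- For a coin with P(H) = p ∈ (0,1) and pattern A = (A_1,...,A_k) over {H,T}, the expected waiting time for A equals sum over m in the set of self-overlap lengths of A of the product over i from 1 to m of 1/P(X = A_i), where m is a self-overlap length if the last m characters of A equal the first m characters of A. -/
open MeasureTheory ProbabilityTheory
open scoped ENNReal

/-! Write `τ` for the waiting time, `k = |A|` and `π(L)` for the probability that a block of
`|L|` draws spells `L`. The event `{τ > n}` only involves the first `n` draws, hence is
independent of the block of draws `n, …, n + k - 1`, so `P(τ > n) π(A) = P(τ > n, A occurs at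
n + k)`. On that event the first occurrence is at `n + m` with `1 ≤ m ≤ k`; it overlaps the
occurrence at `n + k` in `m` letters, which forces `m` to be a self-overlap length, and then
the last `k - m` letters are fresh draws:
`P(τ = n + m, A occurs at n + k) = P(τ = n + m) π(A_{m+1..k})`.
Summing over `n` gives `E τ · π(A) = P(τ < ∞) ∑_m π(A_{m+1..k})`. This first shows `E τ < ∞`,
hence `τ < ∞` almost surely, and dividing by `π(A) = π(A_{1..m}) π(A_{m+1..k})` gives the
formula. -/

theorem ENNReal.list_prod_map_ne_top {α : Type*} {f : α → ℝ≥0∞} {l : List α}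
    (h : ∀ a ∈ l, f a ≠ ⊤) : (l.map f).prod ≠ ⊤ := by
  induction l with
  | nil => simp
  | cons a l ih =>
    simpa using ENNReal.mul_ne_top (h a (by simp)) (ih fun b hb => h b (by simp [hb]))

theorem ENNReal.list_prod_map_take_inv_mul {α : Type*} {f : α → ℝ≥0∞} {l : List α} (m : ℕ)
    (h₀ : ∀ a ∈ l, f a ≠ 0) (htop : ∀ a ∈ l, f a ≠ ⊤) :
    ((l.take m).map fun a => (f a)⁻¹).prod * (l.map f).prod = ((l.drop m).map f).prod := by
  have hcancel : ((l.take m).map fun a => (f a)⁻¹ * f a).prod = 1 :=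
    List.prod_eq_one <| by
      simp only [List.mem_map]
      rintro _ ⟨a, ha, rfl⟩
      have ha' := List.mem_of_mem_take ha
      exact ENNReal.inv_mul_cancel (h₀ a ha') (htop a ha')
  calc ((l.take m).map fun a => (f a)⁻¹).prod * (l.map f).prod
      = ((l.take m).map fun a => (f a)⁻¹).prod * ((l.take m).map f).prod *
          ((l.drop m).map f).prod := by
        rw [mul_assoc, ← List.prod_append (l₁ := (l.take m).map f), ← List.map_append,
          List.take_append_drop]
    _ = ((l.drop m).map f).prod := by rw [← List.prod_map_mul, hcancel, one_mul]

def selfOverlapLengths {α : Type*} [DecidableEq α] (A : List α) : Finset ℕ :=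
  (Finset.Icc 1 A.length).filter fun m => A.drop (A.length - m) = A.take m

section Paths

variable {α : Type*} {A : List α} {x : ℕ → α} {n m t : ℕ}

theorem List.map_range'_eq_append (x : ℕ → α) (n : ℕ) {m k : ℕ} (h : m ≤ k) :
    (List.range' n k).map x = (List.range' n m).map x ++ (List.range' (n + m) (k - m)).map x := by
  rw [← List.map_append, List.range'_append_1, Nat.add_sub_cancel' h]

theorem occursAt_iff_map_range' :
    occursAt A x t ↔ A.length ≤ t ∧ (List.range' (t - A.length) A.length).map x = A := by
  refine and_congr_right fun _ => ?_
  simp [List.ext_getElem_iff, List.getElem_range']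

theorem occursAt_add_length_iff :
    occursAt A x (n + A.length) ↔ (List.range' n A.length).map x = A := by
  simp [occursAt_iff_map_range']

theorem map_range'_eq_drop_of_occursAt (hm : m ≤ A.length) (h : occursAt A x (n + m)) :
    (List.range' n m).map x = A.drop (A.length - m) := by
  obtain ⟨hk, hA⟩ := occursAt_iff_map_range'.mp h
  calc (List.range' n m).map x
      = ((List.range' (n + m - A.length) A.length).map x).drop (A.length - m) := by
        rw [← List.map_drop, List.drop_range']
        congr 2 <;> omega
    _ = A.drop (A.length - m) := by rw [hA]

theorem map_range'_eq_take_of_occursAt (hm : m ≤ A.length) (h : occursAt A x (n + A.length)) :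
    (List.range' n m).map x = A.take m := by
  rw [occursAt_add_length_iff] at h
  rw [← h, List.map_range'_eq_append x n hm, List.take_left' (by simp)]

theorem drop_eq_take_of_occursAt (hm : m ≤ A.length) (h₁ : occursAt A x (n + m))
    (h₂ : occursAt A x (n + A.length)) : A.drop (A.length - m) = A.take m :=
  (map_range'_eq_drop_of_occursAt hm h₁).symm.trans (map_range'_eq_take_of_occursAt hm h₂)

theorem occursAt_add_length_iff_of_occursAt (hm : m ≤ A.length)
    (hov : A.drop (A.length - m) = A.take m) (h : occursAt A x (n + m)) :
    occursAt A x (n + A.length) ↔ (List.range' (n + m) (A.length - m)).map x = A.drop m := by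
  rw [occursAt_add_length_iff, List.map_range'_eq_append x n hm,
    map_range'_eq_drop_of_occursAt hm h, hov]
  exact ⟨fun h => List.append_cancel_left (h.trans (List.take_append_drop m A).symm),
    fun h => h ▸ List.take_append_drop m A⟩

theorem hitTime_le_of_occursAt_s19 (h : occursAt A x t) : hitTime A x ≤ t :=
  sInf_le ⟨t, h, rfl⟩

theorem le_hitTime_of_forall_lt (h : ∀ s < t, ¬ occursAt A x s) : (t : ℝ≥0∞) ≤ hitTime A x := by
  refine le_sInf ?_
  rintro _ ⟨s, hs, rfl⟩
  exact Nat.cast_le.mpr (not_lt.mp fun hst => h s hst hs)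

theorem length_le_hitTime : (A.length : ℝ≥0∞) ≤ hitTime A x :=
  le_hitTime_of_forall_lt fun _ hs h => (Nat.lt_irrefl _ (hs.trans_le h.1))

theorem hitTime_eq_of_occursAt (h : occursAt A x t) (hmin : ∀ s < t, ¬ occursAt A x s) :
    hitTime A x = t :=
  le_antisymm (hitTime_le_of_occursAt_s19 h) (le_hitTime_of_forall_lt hmin)

theorem hitTime_eq_sInf (h : ∃ t, occursAt A x t) : hitTime A x = sInf {t | occursAt A x t} :=
  hitTime_eq_of_occursAt (Nat.sInf_mem h) fun _ => Nat.notMem_of_lt_sInf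

theorem hitTime_eq_top (h : ∀ t, ¬ occursAt A x t) : hitTime A x = ⊤ := by
  have : {s | occursAt A x s} = ∅ := Set.eq_empty_of_forall_notMem h
  simp [hitTime, this]

theorem hitTime_eq_natCast_iff :
    hitTime A x = t ↔ occursAt A x t ∧ ∀ s < t, ¬ occursAt A x s := by
  refine ⟨fun ht => ?_, fun h => hitTime_eq_of_occursAt h.1 h.2⟩
  by_cases h : ∃ t, occursAt A x t
  · rw [hitTime_eq_sInf h, Nat.cast_inj] at ht
    exact ht ▸ ⟨Nat.sInf_mem h, fun _ => Nat.notMem_of_lt_sInf⟩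
  · simp [hitTime_eq_top (not_exists.mp h)] at ht

theorem natCast_lt_hitTime_iff : (n : ℝ≥0∞) < hitTime A x ↔ ∀ t ≤ n, ¬ occursAt A x t := by
  refine ⟨fun hn t ht h => ?_, fun h => ?_⟩
  · exact (hitTime_le_of_occursAt_s19 h).trans (by exact_mod_cast ht) |>.not_gt hn
  · exact (Nat.cast_lt.mpr n.lt_succ_self).trans_le
      (by exact_mod_cast le_hitTime_of_forall_lt fun s hs => h s (Nat.lt_succ_iff.mp hs))

theorem hitTime_eq_top_or_exists_natCast : hitTime A x = ⊤ ∨ ∃ t : ℕ, hitTime A x = t := by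
  by_cases h : ∃ t, occursAt A x t
  · exact Or.inr ⟨_, hitTime_eq_sInf h⟩
  · exact Or.inl (hitTime_eq_top (not_exists.mp h))

theorem hitTime_eq_tsum : hitTime A x = ∑' n : ℕ, if (n : ℝ≥0∞) < hitTime A x then 1 else 0 := by
  rcases hitTime_eq_top_or_exists_natCast with h | ⟨N, h⟩ <;> rw [h]
  · simp
  · rw [tsum_eq_sum (s := Finset.range N) (by simp)]
    simp [Finset.filter_true_of_mem fun _ => Finset.mem_range.mp]

theorem natCast_lt_hitTime_and_occursAt_iff :
    (n : ℝ≥0∞) < hitTime A x ∧ occursAt A x (n + A.length) ↔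
      ∃ m ∈ Finset.Icc 1 A.length, hitTime A x = ↑(n + m) ∧ occursAt A x (n + A.length) := by
  constructor
  · rintro ⟨hlt, hocc⟩
    have hle := hitTime_le_of_occursAt_s19 hocc
    obtain ⟨t, ht⟩ :=
      hitTime_eq_top_or_exists_natCast.resolve_left (ne_top_of_le_ne_top (by simp) hle)
    rw [ht, Nat.cast_lt] at hlt
    rw [ht, Nat.cast_le] at hle
    exact ⟨t - n, Finset.mem_Icc.mpr ⟨by omega, by omega⟩, by rw [ht]; congr; omega, hocc⟩
  · rintro ⟨m, hm, ht, hocc⟩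
    exact ⟨ht ▸ Nat.cast_lt.mpr (by simp at hm; omega), hocc⟩

theorem hitTime_eq_tsum_indicator {Ω : Type*} (X : ℕ → Ω → α) (A : List α) :
    (fun ω => hitTime A (X · ω)) =
      fun ω => ∑' n : ℕ, {ω | (n : ℝ≥0∞) < hitTime A (X · ω)}.indicator 1 ω :=
  funext fun ω => hitTime_eq_tsum.trans (tsum_congr fun n => by simp [Set.indicator_apply])

end Paths

section DependsOn

variable {α : Type*}

theorem dependsOn_occursAt (A : List α) (t : ℕ) :
    DependsOn (occursAt A · t) (Finset.range t : Set ℕ) := fun x y h =>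
  propext <| and_congr_right fun _ => forall₂_congr fun i _ => by
    rw [h _ (by simp; omega)]

theorem dependsOn_natCast_lt_hitTime (A : List α) (n : ℕ) :
    DependsOn (fun x => (n : ℝ≥0∞) < hitTime A x) (Finset.range n : Set ℕ) := fun x y h =>
  propext <| by
    simp only [natCast_lt_hitTime_iff]
    exact forall₂_congr fun t ht => not_congr <| iff_of_eq <|
      dependsOn_occursAt A t fun i hi => h i (by simp at hi ⊢; omega)

theorem dependsOn_hitTime_eq (A : List α) (t : ℕ) :
    DependsOn (fun x => hitTime A x = t) (Finset.range t : Set ℕ) := fun x y h =>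
  propext <| by
    simp only [hitTime_eq_natCast_iff]
    refine and_congr (iff_of_eq (dependsOn_occursAt A t h)) <| forall₂_congr fun s hs =>
      not_congr <| iff_of_eq <| dependsOn_occursAt A s fun i hi => h i (by simp at hi ⊢; omega)

theorem dependsOn_map_eq (l : List ℕ) (L : List α) :
    DependsOn (fun x : ℕ → α => l.map x = L) (l.toFinset : Set ℕ) := fun x y h => by
  simp only [List.map_congr_left fun i hi => h i (by simpa using hi)]

theorem dependsOn_occursAt_add_length (A : List α) (n : ℕ) :
    DependsOn (occursAt A · (n + A.length)) ((List.range' n A.length).toFinset : Set ℕ) :=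
  fun x y h => by
    simp only [occursAt_add_length_iff]
    exact dependsOn_map_eq _ A h

end DependsOn

namespace ProbabilityTheory

variable {α Ω : Type*} [MeasurableSpace Ω] [MeasurableSpace α] [Countable α]
  [MeasurableSingletonClass α] {μ : Measure Ω} {X : ℕ → Ω → α}

theorem measurableSet_setOf_of_dependsOn (hX : ∀ n, Measurable (X n)) {P : (ℕ → α) → Prop}
    {S : Finset ℕ} (hP : DependsOn P S) : MeasurableSet {ω | P (X · ω)} := by
  obtain ⟨g, rfl⟩ := dependsOn_iff_exists_comp.mp hP
  exact (measurable_pi_lambda (fun ω (i : (S : Set ℕ)) => X i ω) fun i => hX i)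
    (Set.to_countable {y | g y}).measurableSet

theorem iIndepFun.measure_setOf_and_eq_mul (hind : iIndepFun X μ) (hX : ∀ n, Measurable (X n))
    {P Q : (ℕ → α) → Prop} {S T : Finset ℕ} (hST : Disjoint S T) (hP : DependsOn P S)
    (hQ : DependsOn Q T) :
    μ {ω | P (X · ω) ∧ Q (X · ω)} = μ {ω | P (X · ω)} * μ {ω | Q (X · ω)} := by
  obtain ⟨g, rfl⟩ := dependsOn_iff_exists_comp.mp hP
  obtain ⟨h, rfl⟩ := dependsOn_iff_exists_comp.mp hQ
  exact (hind.indepFun_finset S T hST hX).measure_inter_preimage_eq_mul _ _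
    (Set.to_countable {y | g y}).measurableSet (Set.to_countable {y | h y}).measurableSet

theorem iIndepFun.measure_map_range'_eq [IsProbabilityMeasure μ] (hind : iIndepFun X μ)
    (hX : ∀ n, Measurable (X n)) {ν : Measure α} (hlaw : ∀ n, μ.map (X n) = ν) (L : List α)
    (n : ℕ) : μ {ω | (List.range' n L.length).map (X · ω) = L} = (L.map fun a => ν {a}).prod := by
  induction L generalizing n with
  | nil => simp
  | cons a L ih =>
    have hdisj : Disjoint ({n} : Finset ℕ) (List.range' (n + 1) L.length).toFinset := by
      simp only [Finset.disjoint_singleton_left, List.mem_toFinset, List.mem_range']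
      omega
    simp only [List.length_cons, List.range'_succ, List.map_cons, List.cons.injEq, List.prod_cons]
    rw [hind.measure_setOf_and_eq_mul hX hdisj (P := fun x => x n = a)
      (fun x y h => by simp [h n (by simp)]) (dependsOn_map_eq _ L), ih, ← hlaw n,
      Measure.map_apply (hX n) (measurableSet_singleton a)]
    rfl

theorem measurable_hitTime (hX : ∀ n, Measurable (X n)) (A : List α) :
    Measurable fun ω => hitTime A (X · ω) := by
  rw [hitTime_eq_tsum_indicator X]
  exact Measurable.tsum fun n => measurable_one.indicator
    (measurableSet_setOf_of_dependsOn hX (dependsOn_natCast_lt_hitTime A n))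

theorem lintegral_hitTime_eq_tsum (hX : ∀ n, Measurable (X n)) (A : List α) :
    ∫⁻ ω, hitTime A (X · ω) ∂μ = ∑' n : ℕ, μ {ω | (n : ℝ≥0∞) < hitTime A (X · ω)} := by
  have hmeas n := measurableSet_setOf_of_dependsOn hX (dependsOn_natCast_lt_hitTime A n)
  rw [hitTime_eq_tsum_indicator X,
    lintegral_tsum fun n => (measurable_one.indicator (hmeas n)).aemeasurable]
  exact tsum_congr fun n => lintegral_indicator_one (hmeas n)

theorem measure_hitTime_eq_and_occursAt [IsProbabilityMeasure μ] (hind : iIndepFun X μ)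
    (hX : ∀ n, Measurable (X n)) {ν : Measure α} (hlaw : ∀ n, μ.map (X n) = ν) [DecidableEq α]
    {A : List α} {m : ℕ} (hm : m ≤ A.length) (n : ℕ) :
    μ {ω | hitTime A (X · ω) = ↑(n + m) ∧ occursAt A (X · ω) (n + A.length)} =
      if A.drop (A.length - m) = A.take m then
        μ {ω | hitTime A (X · ω) = ↑(n + m)} * ((A.drop m).map fun a => ν {a}).prod
      else 0 := by
  split_ifs with hov
  · have hblock := hind.measure_map_range'_eq hX hlaw (A.drop m) (n + m)
    rw [List.length_drop] at hblock
    have hdisj : Disjoint (Finset.range (n + m)) (List.range' (n + m) (A.length - m)).toFinset := by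
      simp only [Finset.disjoint_left, Finset.mem_range, List.mem_toFinset, List.mem_range']
      omega
    rw [← hblock, ← hind.measure_setOf_and_eq_mul hX hdisj (dependsOn_hitTime_eq A _)
      (dependsOn_map_eq _ _)]
    congr 1
    ext ω
    exact and_congr_right fun hτ =>
      occursAt_add_length_iff_of_occursAt hm hov (hitTime_eq_natCast_iff.mp hτ).1
  · convert measure_empty (μ := μ)
    refine Set.eq_empty_of_forall_notMem fun ω ⟨hτ, hocc⟩ => hov ?_
    exact drop_eq_take_of_occursAt hm (hitTime_eq_natCast_iff.mp hτ).1 hocc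

theorem measure_natCast_lt_hitTime_mul [IsProbabilityMeasure μ] (hind : iIndepFun X μ)
    (hX : ∀ n, Measurable (X n)) {ν : Measure α} (hlaw : ∀ n, μ.map (X n) = ν) [DecidableEq α]
    (A : List α) (n : ℕ) :
    μ {ω | (n : ℝ≥0∞) < hitTime A (X · ω)} * (A.map fun a => ν {a}).prod =
      ∑ m ∈ selfOverlapLengths A,
        μ {ω | hitTime A (X · ω) = ↑(n + m)} * ((A.drop m).map fun a => ν {a}).prod := by
  have hdisj : Disjoint (Finset.range n) (List.range' n A.length).toFinset := by
    simp only [Finset.disjoint_left, Finset.mem_range, List.mem_toFinset, List.mem_range']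
    omega
  have hblock : μ {ω | occursAt A (X · ω) (n + A.length)} = (A.map fun a => ν {a}).prod := by
    simp only [occursAt_add_length_iff]
    exact hind.measure_map_range'_eq hX hlaw A n
  have hunion : {ω | (n : ℝ≥0∞) < hitTime A (X · ω) ∧ occursAt A (X · ω) (n + A.length)} =
      ⋃ m ∈ Finset.Icc 1 A.length,
        {ω | hitTime A (X · ω) = ↑(n + m) ∧ occursAt A (X · ω) (n + A.length)} := by
    ext ω
    simp only [Set.mem_ofPred_eq, Set.mem_iUnion, exists_prop]
    exact natCast_lt_hitTime_and_occursAt_iff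
  have hpairwise : (Finset.Icc 1 A.length : Set ℕ).PairwiseDisjoint fun m =>
      {ω | hitTime A (X · ω) = ↑(n + m) ∧ occursAt A (X · ω) (n + A.length)} :=
    fun m _ m' _ hne => Set.disjoint_left.mpr fun ω h h' =>
      hne (by simpa using h.1.symm.trans h'.1)
  rw [← hblock, ← hind.measure_setOf_and_eq_mul hX hdisj (dependsOn_natCast_lt_hitTime A n)
      (dependsOn_occursAt_add_length A n), hunion,
    measure_biUnion_finset hpairwise fun m _ =>
      (measurableSet_setOf_of_dependsOn hX (dependsOn_hitTime_eq A _)).inter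
        (measurableSet_setOf_of_dependsOn hX (dependsOn_occursAt A _)),
    selfOverlapLengths, Finset.sum_filter]
  exact Finset.sum_congr rfl fun m hm =>
    measure_hitTime_eq_and_occursAt hind hX hlaw (Finset.mem_Icc.mp hm).2 n

theorem tsum_measure_hitTime_eq_add (hX : ∀ n, Measurable (X n)) (A : List α) {m : ℕ}
    (hm : m ≤ A.length) :
    ∑' n : ℕ, μ {ω | hitTime A (X · ω) = ↑(n + m)} = μ {ω | hitTime A (X · ω) ≠ ⊤} := by
  have hunion : {ω | hitTime A (X · ω) ≠ ⊤} = ⋃ n : ℕ, {ω | hitTime A (X · ω) = ↑(n + m)} := by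
    ext ω
    simp only [Set.mem_ofPred_eq, Set.mem_iUnion]
    constructor
    · intro hne
      obtain ⟨t, ht⟩ := hitTime_eq_top_or_exists_natCast.resolve_left hne
      have hkt : A.length ≤ t := by exact_mod_cast ht ▸ length_le_hitTime
      exact ⟨t - m, by rw [ht]; congr 1; omega⟩
    · rintro ⟨n, hn⟩
      simp [hn]
  rw [hunion, measure_iUnion
    (fun n n' hne => Set.disjoint_left.mpr fun ω h h' => hne (by simpa using h.symm.trans h'))
    fun n => measurableSet_setOf_of_dependsOn hX (dependsOn_hitTime_eq A _)]

theorem lintegral_hitTime_eq_sum_selfOverlapLengths [IsProbabilityMeasure μ]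
    (hind : iIndepFun X μ) (hX : ∀ n, Measurable (X n)) {ν : Measure α}
    (hlaw : ∀ n, μ.map (X n) = ν) [DecidableEq α] (A : List α) (hA : ∀ a ∈ A, ν {a} ≠ 0) :
    ∫⁻ ω, hitTime A (X · ω) ∂μ =
      ∑ m ∈ selfOverlapLengths A, ((A.take m).map fun a => (ν {a})⁻¹).prod := by
  have : IsProbabilityMeasure ν := hlaw 0 ▸ Measure.isProbabilityMeasure_map (hX 0).aemeasurable
  have htop : ∀ a ∈ A, ν {a} ≠ ⊤ := fun a _ => measure_ne_top ν {a}
  have hπ0 : (A.map fun a => ν {a}).prod ≠ 0 := List.prod_ne_zero (by simpa using hA)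
  have hπtop : (A.map fun a => ν {a}).prod ≠ ⊤ := ENNReal.list_prod_map_ne_top htop
  have hkey : (∫⁻ ω, hitTime A (X · ω) ∂μ) * (A.map fun a => ν {a}).prod =
      (∑ m ∈ selfOverlapLengths A, ((A.drop m).map fun a => ν {a}).prod) *
        μ {ω | hitTime A (X · ω) ≠ ⊤} := by
    rw [lintegral_hitTime_eq_tsum hX, ← ENNReal.tsum_mul_right,
      tsum_congr (measure_natCast_lt_hitTime_mul hind hX hlaw A),
      Summable.tsum_finsetSum fun _ _ => ENNReal.summable, Finset.sum_mul]
    refine Finset.sum_congr rfl fun m hm => ?_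
    rw [ENNReal.tsum_mul_right, mul_comm, tsum_measure_hitTime_eq_add hX A
      (Finset.mem_Icc.mp (Finset.mem_filter.mp hm).1).2]
  have hfinite : ∫⁻ ω, hitTime A (X · ω) ∂μ ≠ ⊤ := fun h => ENNReal.mul_ne_top
    (ENNReal.sum_ne_top.mpr fun m _ =>
      ENNReal.list_prod_map_ne_top fun a ha => htop a (List.mem_of_mem_drop ha))
    (measure_ne_top μ _) (by rw [← hkey, h, ENNReal.top_mul hπ0])
  have has : μ {ω | hitTime A (X · ω) ≠ ⊤} = 1 := by
    have hnull := (measurable_hitTime hX A (measurableSet_singleton ⊤).compl).nullMeasurableSet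
      (μ := μ)
    have hae := (ae_lt_top (measurable_hitTime hX A) hfinite).mono fun _ => ne_of_lt
    exact ((ae_iff_measure_eq hnull).mp hae).trans measure_univ
  rw [has, mul_one] at hkey
  rw [← ENNReal.mul_left_inj hπ0 hπtop, hkey, Finset.sum_mul]
  exact Finset.sum_congr rfl fun m _ => (ENNReal.list_prod_map_take_inv_mul m hA htop).symm

end ProbabilityTheory

theorem PMF.toMeasure_bernoulli_singleton {p : ℝ≥0∞} (hp : p ≠ ⊤) (h : p.toNNReal ≤ 1)
    (b : Bool) : (PMF.bernoulli p.toNNReal h).toMeasure {b} = if b then p else 1 - p := by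
  rw [PMF.toMeasure_apply_singleton _ _ (measurableSet_singleton b), PMF.bernoulli_apply]
  cases b <;> simp [ENNReal.coe_toNNReal hp, ENNReal.coe_sub]

/-- Solovev's formula: for a coin with P(H) = p ∈ (0,1) and a pattern A over {H,T},
the expected waiting time for A equals the sum, over all self-overlap lengths m of A
(i.e. m such that the last m characters of A equal its first m characters), of
∏_{i=1}^{m} 1/P(X = A_i). -/
theorem stmt_19 (p : ℝ≥0∞) (hp0 : 0 < p) (hp1 : p < 1)
    {Ω : Type*} [MeasurableSpace Ω] (μ : Measure Ω) [IsProbabilityMeasure μ]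
    (X : ℕ → Ω → Bool) (hmeas : ∀ n, Measurable (X n))
    (hindep : iIndepFun X μ)
    (hlaw : ∀ n, μ.map (X n) = (PMF.bernoulli p.toNNReal
      (by simpa using ENNReal.toNNReal_mono ENNReal.one_ne_top hp1.le)).toMeasure)
    (A : List Bool) :
    ∫⁻ ω, hitTime A (fun n => X n ω) ∂μ =
      ∑ m ∈ (Finset.Icc 1 A.length).filter
          (fun m => A.drop (A.length - m) = A.take m),
        ((A.take m).map fun a => (if a then p else 1 - p)⁻¹).prod := by
  have hcoin := PMF.toMeasure_bernoulli_singleton hp1.ne_top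
    (by simpa using ENNReal.toNNReal_mono ENNReal.one_ne_top hp1.le)
  have h := lintegral_hitTime_eq_sum_selfOverlapLengths hindep hmeas hlaw A fun a _ => by
    cases a <;> simp [hcoin, hp0.ne', (tsub_pos_of_lt hp1).ne']
  simp only [hcoin] at h
  exact h
end
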